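/- Let f_1 be as above with r-th partial derivative in t given termwise. Then ‖f_1^{(r,0)} − f_2^{(r,0)}‖_C ≥ |f_1^{(r,0)}(1,1)| ≥ c̄·N^{−μ₁+2r−1/s+3/2}, where c̄ = √(3/2)·c̃/(2^r r!). -/
import Mathlib


open Finset
open Polynomial

/-- The orthonormal Legendre polynomial on `[-1,1]`. -/
noncomputable def legP (k : ℕ) : ℝ → ℝ := fun t =>
  Real.sqrt ((k : ℝ) + 1 / 2) * ((2 ^ k * (Nat.factorial k : ℝ))⁻¹) *
    iteratedDeriv k (fun x : ℝ => (x ^ 2 - 1) ^ k) t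

/-- `f₁^{(r,0)} - f₂^{(r,0)} = c̃ N^{-μ₁-1/s} φ₁(τ) Σ'_{k∈S} φ_k^{(r)}(t)`
(the `φ₀φ₀` part of `f₁` and all of `f₂` have vanishing `r`-th `t`-derivative). -/
noncomputable def gDiff (ctil : ℝ) (N : ℕ) (μ₁ s : ℝ) (S : Finset ℕ) (r : ℕ)
    (t τ : ℝ) : ℝ :=
  ctil * (N : ℝ) ^ (-μ₁ - 1 / s) * legP 1 τ * ∑ k ∈ S, iteratedDeriv r (legP k) t

open Polynomial

lemma iteratedDeriv_eval (p : ℝ[X]) (n : ℕ) :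
    iteratedDeriv n (fun x => p.eval x) = fun x => ((derivative^[n]) p).eval x := by
  induction n with
  | zero => simp
  | succ n ih =>
    rw [iteratedDeriv_succ, ih, Function.iterate_succ_apply']
    funext x
    exact Polynomial.deriv _

lemma iterate_deriv_eval_one (p : ℝ[X]) (m : ℕ) :
    ((derivative^[m]) p).eval 1 = (m.factorial : ℝ) * (taylor 1 p).coeff m := by
  rw [taylor_coeff, ← factorial_smul_hasseDeriv]
  simp [LinearMap.smul_apply, Polynomial.eval_smul, nsmul_eq_mul]

lemma taylor_pow_key (k : ℕ) :
    taylor (1:ℝ) ((X^2 - 1)^k) = X^k * (X + C 2)^k := by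
  rw [taylor_apply, pow_comp, sub_comp, pow_comp, X_comp, one_comp]
  rw [← mul_pow]
  congr 1
  simp only [C_1, map_ofNat]
  ring

lemma legP_eval_poly (k r : ℕ) :
    iteratedDeriv r (legP k) 1 =
      Real.sqrt ((k : ℝ) + 1 / 2) * ((2 ^ k * (Nat.factorial k : ℝ))⁻¹) *
        (((k + r).factorial : ℝ) * (2 ^ (k - r) * (k.choose r : ℝ))) := by
  have hfun : legP k = fun t => ((C (Real.sqrt ((k : ℝ) + 1 / 2) *
      ((2 ^ k * (Nat.factorial k : ℝ))⁻¹)) * (derivative^[k] ((X^2-1)^k))).eval t) := by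
    funext t
    have : (fun x : ℝ => (x ^ 2 - 1) ^ k) = fun x => (((X:ℝ[X])^2 - 1)^k).eval x := by
      funext x; simp
    simp [legP, this, iteratedDeriv_eval]
  rw [hfun, iteratedDeriv_eval]
  rw [iterate_derivative_C_mul]
  rw [← Function.iterate_add_apply]
  show eval 1 _ = _
  rw [eval_mul, eval_C]
  congr 1
  rw [show r + k = k + r by omega]
  rw [iterate_deriv_eval_one, taylor_pow_key]
  rw [show k + r = r + k by omega, coeff_X_pow_mul, coeff_X_add_C_pow]

lemma fact_lb (a j : ℕ) : a.factorial * (a+1)^j ≤ (a+j).factorial := by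
  induction j with
  | zero => simp
  | succ j ih =>
    rw [show a + (j+1) = (a+j) + 1 by omega, Nat.factorial_succ, pow_succ]
    calc a.factorial * ((a+1)^j * (a+1)) = (a+1) * (a.factorial * (a+1)^j) := by ring
    _ ≤ (a+j+1) * (a+j).factorial := by
        exact Nat.mul_le_mul (by omega) ih

lemma term_lb (N r k : ℕ) (hN : 1 ≤ N) (hk : N + r ≤ k) :
    Real.sqrt N * (N:ℝ)^(2*r) / ((2:ℝ)^r * (r.factorial : ℝ)) ≤
      iteratedDeriv r (legP k) 1 := by
  have hrk : r ≤ k := by omega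
  rw [legP_eval_poly]
  have hkf : (k.factorial : ℝ) = (k.choose r : ℝ) * r.factorial * (k - r).factorial := by
    exact_mod_cast (Nat.choose_mul_factorial_mul_factorial hrk).symm
  have h2k : (2:ℝ)^k = 2^r * 2^(k-r) := by
    rw [← pow_add]; congr 1; omega
  have hch : (0:ℝ) < (k.choose r : ℝ) := by exact_mod_cast Nat.choose_pos hrk
  have heq : Real.sqrt ((k : ℝ) + 1 / 2) * ((2 ^ k * (Nat.factorial k : ℝ))⁻¹) *
        (((k + r).factorial : ℝ) * (2 ^ (k - r) * (k.choose r : ℝ))) =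
      Real.sqrt ((k : ℝ) + 1 / 2) * (((k + r).factorial : ℝ) /
        ((2:ℝ)^r * (r.factorial : ℝ) * ((k - r).factorial : ℝ))) := by
    rw [hkf, h2k]
    have h1 : ((r.factorial : ℝ)) ≠ 0 := by positivity
    have h2 : (((k-r).factorial : ℝ)) ≠ 0 := by positivity
    field_simp
  rw [heq]
  have key : (N:ℝ)^(2*r) * ((k-r).factorial : ℝ) ≤ ((k + r).factorial : ℝ) := by
    have : N^(2*r) * (k-r).factorial ≤ (k+r).factorial := by
      calc N^(2*r) * (k-r).factorial ≤ (k-r+1)^(2*r) * (k-r).factorial :=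
        Nat.mul_le_mul_right _ (Nat.pow_le_pow_left (by omega) _)
      _ = (k-r).factorial * (k-r+1)^(2*r) := Nat.mul_comm _ _
      _ ≤ ((k-r) + 2*r).factorial := fact_lb _ _
      _ = (k+r).factorial := by congr 1; omega
    exact_mod_cast this
  have hsq : Real.sqrt N ≤ Real.sqrt ((k : ℝ) + 1/2) := by
    apply Real.sqrt_le_sqrt
    have : (N:ℝ) ≤ (k:ℝ) := by exact_mod_cast (by omega : N ≤ k)
    linarith
  rw [div_le_iff₀ (by positivity)]
  have h3 : (0:ℝ) < ((k-r).factorial : ℝ) := by positivity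
  have hdiv : (N:ℝ)^(2*r) ≤ ((k+r).factorial : ℝ) / ((k-r).factorial : ℝ) := by
    rw [le_div_iff₀ h3]; exact key
  calc Real.sqrt N * (N:ℝ)^(2*r)
      ≤ Real.sqrt ((k:ℝ) + 1/2) * (((k+r).factorial : ℝ) / ((k-r).factorial : ℝ)) :=
        mul_le_mul hsq hdiv (by positivity) (Real.sqrt_nonneg _)
  _ = Real.sqrt ((k : ℝ) + 1/2) * (((k + r).factorial : ℝ) /
        ((2:ℝ)^r * (r.factorial : ℝ) * ((k - r).factorial : ℝ))) * ((2:ℝ)^r * (r.factorial : ℝ)) := by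
      field_simp

lemma legP_one_one : legP 1 1 = Real.sqrt (3/2) := by
  have h := legP_eval_poly 1 0
  rw [iteratedDeriv_zero] at h
  rw [h]
  norm_num
  ring

/-- `‖f₁^{(r,0)} - f₂^{(r,0)}‖_C ≥ |f₁^{(r,0)}(1,1)| ≥ c̄ N^{-μ₁+2r-1/s+3/2}`,
where `c̄ = √(3/2) c̃ / (2^r r!)`: any uniform bound on `[-1,1]²` dominates
`|f₁^{(r,0)}(1,1)|`, which itself dominates `c̄ N^{-μ₁+2r-1/s+3/2}`. -/
theorem f1_deriv_sup_lower_bound (s μ₁ : ℝ) (hs : 1 ≤ s) (hμ₁ : 0 < μ₁)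
    (r N : ℕ) (hr : 1 ≤ r) (hN : 1 ≤ N) (ctil : ℝ) (hc : 0 < ctil)
    (S : Finset ℕ) (hcard : S.card = N) (hSsub : S ⊆ Finset.Icc (N + r) (3 * N + r)) :
    (∀ M : ℝ, (∀ t ∈ Set.Icc (-1 : ℝ) 1, ∀ τ ∈ Set.Icc (-1 : ℝ) 1,
        |gDiff ctil N μ₁ s S r t τ| ≤ M) → |gDiff ctil N μ₁ s S r 1 1| ≤ M) ∧
      Real.sqrt (3 / 2) * ctil / (2 ^ r * (Nat.factorial r : ℝ)) *
          (N : ℝ) ^ (-μ₁ + 2 * (r : ℝ) - 1 / s + 3 / 2) ≤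
        |gDiff ctil N μ₁ s S r 1 1| := by
  have hNpos : (0:ℝ) < (N:ℝ) := by exact_mod_cast hN
  constructor
  · intro M h
    exact h 1 ⟨by norm_num, le_rfl⟩ 1 ⟨by norm_num, le_rfl⟩
  set b : ℝ := Real.sqrt N * (N:ℝ)^(2*r) / ((2:ℝ)^r * (r.factorial : ℝ)) with hbdef
  have hsum : (N:ℝ) * b ≤ ∑ k ∈ S, iteratedDeriv r (legP k) 1 := by
    have h := Finset.card_nsmul_le_sum S (fun k => iteratedDeriv r (legP k) 1) b ?_
    · rw [hcard] at h
      simpa [nsmul_eq_mul] using h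
    · intro k hk
      have hm := hSsub hk
      rw [Finset.mem_Icc] at hm
      exact term_lb N r k hN hm.1
  have hA : (0:ℝ) < (N:ℝ)^(-μ₁ - 1/s) := Real.rpow_pos_of_pos hNpos _
  have hdecomp : (N : ℝ) ^ (-μ₁ + 2 * (r : ℝ) - 1 / s + 3 / 2)
      = (N:ℝ)^(-μ₁-1/s) * ((N:ℝ)^(2*(r:ℝ)) * (N:ℝ)^((3:ℝ)/2)) := by
    rw [← Real.rpow_add hNpos, ← Real.rpow_add hNpos]
    ring_nf
  have e1 : (N:ℝ)^(2*(r:ℝ)) = (N:ℝ)^(2*r) := by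
    rw [← Real.rpow_natCast (N:ℝ) (2*r)]
    congr 1
    push_cast
    ring
  have e2 : (N:ℝ)^((3:ℝ)/2) = (N:ℝ) * Real.sqrt N := by
    rw [show (3:ℝ)/2 = 1 + 1/2 by norm_num, Real.rpow_add hNpos, Real.rpow_one,
      Real.sqrt_eq_rpow]
  have hfinal : Real.sqrt (3 / 2) * ctil / (2 ^ r * (Nat.factorial r : ℝ)) *
        (N : ℝ) ^ (-μ₁ + 2 * (r : ℝ) - 1 / s + 3 / 2)
      = ctil * (N:ℝ)^(-μ₁-1/s) * Real.sqrt (3/2) * ((N:ℝ) * b) := by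
    rw [hdecomp, e1, e2, hbdef]
    have h1 : ((2:ℝ)^r * (r.factorial : ℝ)) ≠ 0 := by positivity
    field_simp
  have hgd : gDiff ctil N μ₁ s S r 1 1
      = ctil * (N:ℝ)^(-μ₁-1/s) * Real.sqrt (3/2) * ∑ k ∈ S, iteratedDeriv r (legP k) 1 := by
    rw [gDiff, legP_one_one]
  have hle : Real.sqrt (3 / 2) * ctil / (2 ^ r * (Nat.factorial r : ℝ)) *
        (N : ℝ) ^ (-μ₁ + 2 * (r : ℝ) - 1 / s + 3 / 2) ≤ gDiff ctil N μ₁ s S r 1 1 := by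
    rw [hfinal, hgd]
    apply mul_le_mul_of_nonneg_left hsum
    positivity
  exact le_trans hle (le_abs_self _)
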